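/- arXiv:2005.02112 — 4 statements merged into one kernel-verified Lean document; each statement's English description precedes it below -/
import Mathlib

section
/- For any invertible real n×n matrix g and any symmetric positive definite matrices p, q and t ∈ [0,1], the congruence action commutes with the geodesic: g (p #_t q) gᵀ = (g p gᵀ) #_t (g q gᵀ), where p #_t q = p^{1/2}(p^{-1/2} q p^{-1/2})^t p^{1/2}. -/
open Matrix

noncomputable section

variable {n : ℕ}

/-- The `t`-th power of a symmetric matrix, defined via the spectral decomposition
(junk value if the matrix is not symmetric). -/
noncomputable def mpow (A : Matrix (Fin n) (Fin n) ℝ) (t : ℝ) : Matrix (Fin n) (Fin n) ℝ :=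
  if h : A.IsHermitian then
    (h.eigenvectorUnitary : Matrix (Fin n) (Fin n) ℝ) *
      Matrix.diagonal (fun i => (h.eigenvalues i) ^ t) *
      (star (h.eigenvectorUnitary : Matrix (Fin n) (Fin n) ℝ))
  else A

/-- Eigenvalues of a symmetric matrix, listed in nonincreasing order
(junk value `0` if the matrix is not symmetric). -/
noncomputable def eigsDesc (A : Matrix (Fin n) (Fin n) ℝ) : Fin n → ℝ :=
  if h : A.IsHermitian then fun i => h.eigenvalues (Tuple.sort h.eigenvalues i.rev) else 0

/-- Singular values of a square real matrix, in nonincreasing order. -/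
noncomputable def svals (g : Matrix (Fin n) (Fin n) ℝ) : Fin n → ℝ :=
  fun i => Real.sqrt (eigsDesc (gᵀ * g) i)

/-- The vector `σ⃗(g)` of base-2 logarithms of the singular values of `g`,
in nonincreasing order. -/
noncomputable def sigmaVec (g : Matrix (Fin n) (Fin n) ℝ) : Fin n → ℝ :=
  fun i => Real.logb 2 (svals g i)

/-- The vectorial distance `d⃗(p,q) = 2 σ⃗(p^{-1/2} q^{1/2})`. -/
noncomputable def vecd (p q : Matrix (Fin n) (Fin n) ℝ) : Fin n → ℝ :=
  fun i => 2 * sigmaVec (mpow p (-(1/2)) * mpow q (1/2)) i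

/-- Partial sum of the first `k` components of a vector in `ℝⁿ`. -/
noncomputable def psum (ξ : Fin n → ℝ) (k : ℕ) : ℝ :=
  ∑ i ∈ Finset.univ.filter (fun i : Fin n => (i : ℕ) < k), ξ i

/-- The majorization-type partial order `⪯` on `ℝⁿ`: all partial sums are compared,
with equality of the total sums. -/
def maj (ξ η : Fin n → ℝ) : Prop :=
  (∀ k : ℕ, k < n → psum ξ k ≤ psum η k) ∧ psum ξ n = psum η n

/-- The geodesic `p #_t q = p^{1/2} (p^{-1/2} q p^{-1/2})^t p^{1/2}` in the trace metric
on positive definite matrices. -/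
noncomputable def geo (p q : Matrix (Fin n) (Fin n) ℝ) (t : ℝ) : Matrix (Fin n) (Fin n) ℝ :=
  mpow p (1/2) * mpow (mpow p (-(1/2)) * q * mpow p (-(1/2))) t * mpow p (1/2)

/-- The Riemannian (trace-metric) distance on positive definite matrices, expressed as the
Euclidean norm of the vector of base-2 logarithms of the eigenvalues of `p^{-1/2} q p^{-1/2}`. -/
noncomputable def rdist (p q : Matrix (Fin n) (Fin n) ℝ) : ℝ :=
  Real.sqrt (∑ i : Fin n,
    (Real.logb 2 (eigsDesc (mpow p (-(1/2)) * q * mpow p (-(1/2))) i)) ^ 2)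


/- The polar factor `u` of `g p^{1/2}` is orthogonal and conjugates `p^{-1/2} q p^{-1/2}` into
`(g p gᵀ)^{-1/2} (g q gᵀ) (g p gᵀ)^{-1/2}`. Matrix powers, being given by the continuous
functional calculus, commute with orthogonal conjugation, and `(g p gᵀ)^{1/2} u = g p^{1/2}`
absorbs the outer factors of the geodesic. -/

lemma mpow_eq_cfc {A : Matrix (Fin n) (Fin n) ℝ} (hA : A.IsHermitian) (t : ℝ) :
    mpow A t = cfc (fun x : ℝ => x ^ t) A := by
  rw [mpow, dif_pos hA, hA.cfc_eq]
  rfl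

lemma mpow_isHermitian {A : Matrix (Fin n) (Fin n) ℝ} (hA : A.IsHermitian) (t : ℝ) :
    (mpow A t).IsHermitian := by
  rw [mpow_eq_cfc hA t]
  exact cfc_predicate _ A

lemma mpow_add {p : Matrix (Fin n) (Fin n) ℝ} (hp : p.PosDef) (s t : ℝ) :
    mpow p (s + t) = mpow p s * mpow p t := by
  have hpos : ∀ x ∈ spectrum ℝ p, 0 < x := fun x hx => by
    rw [hp.isHermitian.spectrum_real_eq_range_eigenvalues] at hx
    obtain ⟨i, rfl⟩ := hx
    exact hp.eigenvalues_pos i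
  have hfin := p.finite_real_spectrum
  simp only [mpow_eq_cfc hp.isHermitian]
  rw [← cfc_mul _ _ _ (hfin.continuousOn _) (hfin.continuousOn _)]
  exact cfc_congr fun x hx => Real.rpow_add (hpos x hx) s t

lemma mpow_zero {A : Matrix (Fin n) (Fin n) ℝ} (hA : A.IsHermitian) : mpow A 0 = 1 := by
  rw [mpow_eq_cfc hA, cfc_congr (g := fun _ => 1) fun x _ => Real.rpow_zero x]
  exact cfc_const_one ℝ A

lemma mpow_one {A : Matrix (Fin n) (Fin n) ℝ} (hA : A.IsHermitian) : mpow A 1 = A := by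
  rw [mpow_eq_cfc hA, cfc_congr (g := id) fun x _ => Real.rpow_one x]
  exact cfc_id ℝ A

lemma mpow_half_mul_mpow_half {p : Matrix (Fin n) (Fin n) ℝ} (hp : p.PosDef) :
    mpow p (1/2) * mpow p (1/2) = p := by
  rw [← mpow_add hp]
  norm_num [mpow_one hp.isHermitian]

lemma mpow_neg_half_mul_mpow_half {p : Matrix (Fin n) (Fin n) ℝ} (hp : p.PosDef) :
    mpow p (-(1/2)) * mpow p (1/2) = 1 := by
  rw [← mpow_add hp, neg_add_cancel, mpow_zero hp.isHermitian]

lemma mpow_half_mul_mpow_neg_half {p : Matrix (Fin n) (Fin n) ℝ} (hp : p.PosDef) :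
    mpow p (1/2) * mpow p (-(1/2)) = 1 := by
  rw [← mpow_add hp, add_neg_cancel, mpow_zero hp.isHermitian]

lemma mpow_neg_half_mul_self_mul_mpow_neg_half {p : Matrix (Fin n) (Fin n) ℝ} (hp : p.PosDef) :
    mpow p (-(1/2)) * p * mpow p (-(1/2)) = 1 := by
  calc _ = mpow p (-(1/2)) * mpow p 1 * mpow p (-(1/2)) := by rw [mpow_one hp.isHermitian]
    _ = 1 := by
      rw [← mpow_add hp, ← mpow_add hp]
      norm_num [mpow_zero hp.isHermitian]

lemma mpow_unitary_conj {u A : Matrix (Fin n) (Fin n) ℝ}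
    (hu : u ∈ unitary (Matrix (Fin n) (Fin n) ℝ)) (hA : A.IsHermitian) (t : ℝ) :
    mpow (u * A * star u) t = u * mpow A t * star u := by
  have huA : (u * A * star u).IsHermitian := (show IsSelfAdjoint A from hA).conjugate u
  have hconj : Continuous (Unitary.conjStarAlgAut ℝ _ ⟨u, hu⟩) :=
    (continuous_const.mul continuous_id).mul continuous_const
  rw [mpow_eq_cfc huA, mpow_eq_cfc hA]
  exact (StarAlgHomClass.map_cfc (Unitary.conjStarAlgAut ℝ _ ⟨u, hu⟩) _ A
    (A.finite_real_spectrum.continuousOn _) hconj hA huA).symm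

lemma Matrix.PosDef.mul_mul_transpose_of_isUnit {g p : Matrix (Fin n) (Fin n) ℝ} (hg : IsUnit g)
    (hp : p.PosDef) :
    (g * p * gᵀ).PosDef := by
  simpa using hp.mul_mul_conjTranspose_same (vecMul_injective_of_isUnit hg)

/-- The orthogonal factor `u` in the polar decomposition `g p^{1/2} = (g p gᵀ)^{1/2} u`. -/
def polarFactor (g p : Matrix (Fin n) (Fin n) ℝ) : Matrix (Fin n) (Fin n) ℝ :=
  mpow (g * p * gᵀ) (-(1/2)) * g * mpow p (1/2)

section polarFactor

variable {g p : Matrix (Fin n) (Fin n) ℝ}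

lemma star_polarFactor (hp : p.PosDef) :
    star (polarFactor g p) = mpow p (1/2) * gᵀ * mpow (g * p * gᵀ) (-(1/2)) := by
  have hgpg : (g * p * gᵀ).IsHermitian := isHermitian_mul_mul_conjTranspose g hp.isHermitian
  rw [polarFactor, star_mul, star_mul, star_eq_conjTranspose, star_eq_conjTranspose,
    star_eq_conjTranspose, (mpow_isHermitian hp.isHermitian _).eq, (mpow_isHermitian hgpg _).eq,
    conjTranspose_eq_transpose_of_trivial, ← mul_assoc]

lemma mpow_half_mul_polarFactor (hg : IsUnit g) (hp : p.PosDef) :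
    mpow (g * p * gᵀ) (1/2) * polarFactor g p = g * mpow p (1/2) := by
  rw [polarFactor, ← mul_assoc, ← mul_assoc,
    mpow_half_mul_mpow_neg_half (hp.mul_mul_transpose_of_isUnit hg), one_mul]

lemma star_polarFactor_mul_mpow_half (hg : IsUnit g) (hp : p.PosDef) :
    star (polarFactor g p) * mpow (g * p * gᵀ) (1/2) = mpow p (1/2) * gᵀ := by
  rw [star_polarFactor hp, mul_assoc,
    mpow_neg_half_mul_mpow_half (hp.mul_mul_transpose_of_isUnit hg), mul_one]

lemma polarFactor_mem_unitary (hg : IsUnit g) (hp : p.PosDef) :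
    polarFactor g p ∈ unitary (Matrix (Fin n) (Fin n) ℝ) := by
  have h : polarFactor g p * star (polarFactor g p) = 1 := by
    rw [star_polarFactor hp, polarFactor]
    calc _ = mpow (g * p * gᵀ) (-(1/2)) * (g * (mpow p (1/2) * mpow p (1/2)) * gᵀ) *
          mpow (g * p * gᵀ) (-(1/2)) := by simp only [mul_assoc]
      _ = 1 := by
        rw [mpow_half_mul_mpow_half hp,
          mpow_neg_half_mul_self_mul_mpow_neg_half (hp.mul_mul_transpose_of_isUnit hg)]
  exact Unitary.mem_iff.mpr ⟨mul_eq_one_comm.mp h, h⟩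

lemma polarFactor_conj (hp : p.PosDef) (q : Matrix (Fin n) (Fin n) ℝ) :
    polarFactor g p * (mpow p (-(1/2)) * q * mpow p (-(1/2))) * star (polarFactor g p) =
      mpow (g * p * gᵀ) (-(1/2)) * (g * q * gᵀ) * mpow (g * p * gᵀ) (-(1/2)) := by
  rw [star_polarFactor hp, polarFactor]
  calc _ = mpow (g * p * gᵀ) (-(1/2)) * g * (mpow p (1/2) * mpow p (-(1/2))) * q *
        (mpow p (-(1/2)) * mpow p (1/2)) * gᵀ * mpow (g * p * gᵀ) (-(1/2)) := by
        simp only [mul_assoc]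
    _ = _ := by
      rw [mpow_half_mul_mpow_neg_half hp, mpow_neg_half_mul_mpow_half hp, mul_one,
        mul_one]
      simp only [mul_assoc]

end polarFactor

theorem statement3_general {n : ℕ} (g p q : Matrix (Fin n) (Fin n) ℝ) (hg : IsUnit g)
    (hp : p.PosDef) (hq : q.PosDef) (t : ℝ) :
    g * geo p q t * gᵀ = geo (g * p * gᵀ) (g * q * gᵀ) t := by
  have hA : (mpow p (-(1/2)) * q * mpow p (-(1/2))).IsHermitian := by
    have h := isHermitian_mul_mul_conjTranspose (mpow p (-(1/2))) hq.isHermitian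
    rwa [(mpow_isHermitian hp.isHermitian _).eq] at h
  rw [geo, geo, ← polarFactor_conj hp, mpow_unitary_conj (polarFactor_mem_unitary hg hp) hA]
  calc _ = (g * mpow p (1/2)) * mpow (mpow p (-(1/2)) * q * mpow p (-(1/2))) t *
        (mpow p (1/2) * gᵀ) := by simp only [mul_assoc]
    _ = (mpow (g * p * gᵀ) (1/2) * polarFactor g p) *
        mpow (mpow p (-(1/2)) * q * mpow p (-(1/2))) t *
        (star (polarFactor g p) * mpow (g * p * gᵀ) (1/2)) := by
      rw [mpow_half_mul_polarFactor hg hp, star_polarFactor_mul_mpow_half hg hp]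
    _ = _ := by simp only [mul_assoc]

/-- The congruence action `g ∗ p = g p gᵀ` of an invertible matrix
commutes with geodesics: `g (p #_t q) gᵀ = (g p gᵀ) #_t (g q gᵀ)`. -/
theorem statement3 {n : ℕ} (g p q : Matrix (Fin n) (Fin n) ℝ) (hg : IsUnit g)
    (hp : p.PosDef) (hq : q.PosDef) (t : ℝ) (ht : t ∈ Set.Icc (0:ℝ) 1) :
    g * geo p q t * gᵀ = geo (g * p * gᵀ) (g * q * gᵀ) t :=
  statement3_general g p q hg hp hq t
end
end

section
/- The vectorial distance on positive definite matrices satisfies the triangle inequality with respect to the weak-majorization order ⪯: for all symmetric positive definite p, q, r, d⃗(p,q) ⪯ d⃗(p,r) + d⃗(r,q), where ξ ⪯ η means Σ_{i=1}^k ξᵢ ≤ Σ_{i=1}^k ηᵢ for all k < n and Σ_{i=1}^n ξᵢ = Σ_{i=1}^n ηᵢ. -/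
/-!
Put `g₁ = p^{-1/2} r^{1/2}` and `g₂ = r^{-1/2} q^{1/2}`, so that `g₁ g₂ = p^{-1/2} q^{1/2}`. The
claim is then that `σ⃗(g₁ g₂) ⪯ σ⃗(g₁) + σ⃗(g₂)`, i.e. Horn's inequality
`∏_{i<k} σᵢ(AB) ≤ ∏_{i<k} σᵢ(A) · ∏_{i<k} σᵢ(B)` together with `|det (AB)| = |det A| |det B|`.

Horn's inequality comes from the variational formula `∏_{i<k} σᵢ(M) = max |det (Xᵀ M Y)|` over
`n × k` matrices `X`, `Y` with orthonormal columns. The maximum is attained at singular vectors;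
the upper bound follows from the singular value decomposition, Cauchy–Binet and Cauchy–Schwarz.
For `M = AB` with optimal `U`, `V`, let `Q` be the isometric factor of `B V = Q Σ Wᵀ`; then
`Uᵀ A B V = (Uᵀ A Q)(Qᵀ B V)` and both factors are bounded by the formula.
-/

open Matrix

noncomputable section

variable {n : ℕ}

open Finset Equiv

section CauchyBinet

variable {R : Type*} [CommRing R] {ι m : Type*} [Fintype ι] [DecidableEq ι] [Fintype m]

theorem Matrix.det_mul_eq_sum_prod_mul_det (A : Matrix ι m R) (B : Matrix m ι R) :
    (A * B).det = ∑ f : ι → m, (∏ i, A i (f i)) * (B.submatrix f id).det := by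
  have hrows : A * B = fun i => ∑ j, A i j • B j := by
    ext i j
    simp [mul_apply, Finset.sum_apply]
  rw [hrows]
  change detRowAlternating.toMultilinearMap _ = _
  rw [MultilinearMap.map_sum]
  refine sum_congr rfl fun f _ => ?_
  exact (detRowAlternating.map_smul_univ _ _).trans (smul_eq_mul _ _)

/-- **Cauchy–Binet**, summed over all maps `ι → m` instead of over `|ι|`-subsets of `m`: each
subset is the image of `|ι|!` injective maps contributing the same term, and non-injective maps
contribute `0`. -/
theorem Matrix.factorial_mul_det_mul (A : Matrix ι m R) (B : Matrix m ι R) :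
    ((Fintype.card ι).factorial : R) * (A * B).det =
      ∑ f : ι → m, (A.submatrix id f).det * (B.submatrix f id).det := by
  have hperm : ∀ τ : Perm ι, (A * B).det =
      ∑ f : ι → m, (Perm.sign τ : R) * (∏ i, A i (f (τ i))) * (B.submatrix f id).det := by
    intro τ
    rw [det_mul_eq_sum_prod_mul_det, ← (Equiv.arrowCongr τ.symm (Equiv.refl m)).sum_comp]
    refine sum_congr rfl fun f _ => ?_
    have hsub : B.submatrix (Equiv.arrowCongr τ.symm (Equiv.refl m) f) id =
        (B.submatrix f id).submatrix τ id := rfl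
    rw [hsub, det_permute]
    change (∏ i, A i (f (τ i))) * _ = _
    ring
  have hdet : ∀ f : ι → m, (A.submatrix id f).det =
      ∑ τ : Perm ι, (Perm.sign τ : R) * ∏ i, A i (f (τ i)) := fun f => by
    rw [← det_transpose, det_apply']
    rfl
  calc ((Fintype.card ι).factorial : R) * (A * B).det
      = ∑ τ : Perm ι, (A * B).det := by simp [Fintype.card_perm]
    _ = ∑ f : ι → m, (A.submatrix id f).det * (B.submatrix f id).det := by
      simp only [hdet, sum_mul]
      rw [sum_comm]
      exact sum_congr rfl fun τ _ => hperm τ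

end CauchyBinet

theorem Fin.val_le_val_of_strictMono {k m : ℕ} {g : Fin k → Fin m} (hg : StrictMono g)
    (j : Fin k) : (j : ℕ) ≤ g j := by
  have := Finset.card_le_card_of_injOn (s := Iic j) (t := Iic (g j)) g
    (fun i hi => Finset.mem_Iic.2 (hg.monotone (Finset.mem_Iic.1 hi))) hg.injective.injOn
  simpa using this

theorem Fin.prod_filter_val_lt {M : Type*} [CommMonoid M] {k m : ℕ} (hk : k ≤ m)
    (d : Fin m → M) :
    ∏ i ∈ univ.filter (fun i : Fin m => (i : ℕ) < k), d i =
      ∏ j : Fin k, d (Fin.castLE hk j) := by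
  have hfilter : univ.filter (fun i : Fin m => (i : ℕ) < k) = univ.map (Fin.castLEEmb hk) := by
    ext i
    simpa using ⟨fun h => ⟨⟨i, h⟩, rfl⟩, by rintro ⟨j, rfl⟩; exact j.isLt⟩
  rw [hfilter, prod_map]
  rfl

theorem Antitone.prod_comp_le_prod_filter_val_lt {k m : ℕ} {d : Fin m → ℝ} (hd : Antitone d)
    (hd0 : 0 ≤ d) {f : Fin k → Fin m} (hf : Function.Injective f) :
    ∏ i, d (f i) ≤ ∏ i ∈ univ.filter (fun i : Fin m => (i : ℕ) < k), d i := by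
  have hkm : k ≤ m := by simpa using Fintype.card_le_of_injective f hf
  have hsorted : StrictMono (f ∘ Tuple.sort f) :=
    (Tuple.monotone_sort f).strictMono_of_injective (hf.comp (Tuple.sort f).injective)
  rw [← Equiv.prod_comp (Tuple.sort f) (fun i => d (f i)), Fin.prod_filter_val_lt hkm]
  exact prod_le_prod (fun i _ => hd0 _) fun j _ => hd (Fin.val_le_val_of_strictMono hsorted j)

theorem Matrix.sum_det_submatrix_sq_of_transpose_mul_self {ι m : Type*} [Fintype ι]
    [DecidableEq ι] [Fintype m] {X : Matrix m ι ℝ} (hX : Xᵀ * X = 1) :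
    ∑ f : ι → m, (X.submatrix f id).det ^ 2 = (Fintype.card ι).factorial := by
  have h := factorial_mul_det_mul Xᵀ X
  rw [hX, det_one, mul_one] at h
  rw [h]
  refine sum_congr rfl fun f _ => ?_
  rw [sq, ← det_transpose (X.submatrix f id)]
  rfl

theorem Matrix.sum_abs_det_submatrix_mul_le {ι m : Type*} [Fintype ι] [DecidableEq ι]
    [Fintype m] {X Y : Matrix m ι ℝ} (hX : Xᵀ * X = 1) (hY : Yᵀ * Y = 1) :
    ∑ f : ι → m, |(X.submatrix f id).det * (Y.submatrix f id).det| ≤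
      (Fintype.card ι).factorial := by
  have h := sum_mul_sq_le_sq_mul_sq univ (fun f : ι → m => |(X.submatrix f id).det|)
    (fun f => |(Y.submatrix f id).det|)
  simp only [sq_abs, sum_det_submatrix_sq_of_transpose_mul_self hX,
    sum_det_submatrix_sq_of_transpose_mul_self hY, ← abs_mul, ← sq] at h
  exact (abs_le_of_sq_le_sq' h (Nat.cast_nonneg _)).2

theorem Matrix.factorial_mul_det_transpose_mul_diagonal_mul {R : Type*} [CommRing R]
    {ι m : Type*} [Fintype ι] [DecidableEq ι] [Fintype m] [DecidableEq m]
    (X Y : Matrix m ι R) (d : m → R) :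
    ((Fintype.card ι).factorial : R) * (Xᵀ * diagonal d * Y).det =
      ∑ f : ι → m, (∏ i, d (f i)) * ((X.submatrix f id).det * (Y.submatrix f id).det) := by
  rw [factorial_mul_det_mul]
  refine sum_congr rfl fun f _ => ?_
  have hsub : (Xᵀ * diagonal d).submatrix id f = (X.submatrix f id)ᵀ * diagonal (d ∘ f) := by
    ext i j
    simp [mul_diagonal]
  rw [hsub, det_mul, det_diagonal, det_transpose]
  simp only [Function.comp_apply]
  ring

theorem Matrix.abs_det_transpose_mul_diagonal_mul_le {k m : ℕ} {d : Fin m → ℝ}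
    (hd : Antitone d) (hd0 : 0 ≤ d) {X Y : Matrix (Fin m) (Fin k) ℝ} (hX : Xᵀ * X = 1)
    (hY : Yᵀ * Y = 1) :
    |(Xᵀ * diagonal d * Y).det| ≤
      ∏ i ∈ univ.filter (fun i : Fin m => (i : ℕ) < k), d i := by
  set c := ∏ i ∈ univ.filter (fun i : Fin m => (i : ℕ) < k), d i
  set K : ℝ := ↑(Fintype.card (Fin k)).factorial
  have hterm : ∀ f : Fin k → Fin m,
      |(∏ i, d (f i)) * ((X.submatrix f id).det * (Y.submatrix f id).det)| ≤
        c * |(X.submatrix f id).det * (Y.submatrix f id).det| := by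
    intro f
    rw [abs_mul, abs_of_nonneg (prod_nonneg fun i _ => hd0 (f i))]
    by_cases hf : Function.Injective f
    · exact mul_le_mul_of_nonneg_right (hd.prod_comp_le_prod_filter_val_lt hd0 hf) (abs_nonneg _)
    · obtain ⟨i, j, hij, hne⟩ := Function.not_injective_iff.mp hf
      rw [det_zero_of_row_eq hne (by ext; simp [hij]), zero_mul, abs_zero, mul_zero, mul_zero]
  have hK : 0 < K := by positivity
  refine le_of_mul_le_mul_left ?_ hK
  calc K * |(Xᵀ * diagonal d * Y).det|
      = |∑ f : Fin k → Fin m,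
          (∏ i, d (f i)) * ((X.submatrix f id).det * (Y.submatrix f id).det)| := by
        rw [← factorial_mul_det_transpose_mul_diagonal_mul, abs_mul, abs_of_pos hK]
    _ ≤ ∑ f : Fin k → Fin m, c * |(X.submatrix f id).det * (Y.submatrix f id).det| :=
        (abs_sum_le_sum_abs _ _).trans (sum_le_sum fun f _ => hterm f)
    _ ≤ c * K := by
        rw [← mul_sum]
        exact mul_le_mul_of_nonneg_left (sum_abs_det_submatrix_mul_le hX hY)
          (prod_nonneg fun i _ => hd0 i)
    _ = K * c := mul_comm _ _

section Spectral

variable {A : Matrix (Fin n) (Fin n) ℝ}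

theorem mpow_mul_mpow_neg (hA : A.PosDef) (t : ℝ) : mpow A t * mpow A (-t) = 1 := by
  set U := (hA.1.eigenvectorUnitary : Matrix (Fin n) (Fin n) ℝ)
  set μ := hA.1.eigenvalues
  have hD : diagonal (fun i => μ i ^ t) * diagonal (fun i => μ i ^ (-t)) = 1 := by
    rw [diagonal_mul_diagonal, ← diagonal_one]
    refine congrArg diagonal (funext fun i => ?_)
    rw [← Real.rpow_add (hA.eigenvalues_pos i), add_neg_cancel, Real.rpow_zero]
  rw [mpow, mpow, dif_pos hA.1, dif_pos hA.1]
  calc U * diagonal (fun i => μ i ^ t) * star U * (U * diagonal (fun i => μ i ^ (-t)) * star U)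
      = U * (diagonal (fun i => μ i ^ t) * (star U * U) * diagonal (fun i => μ i ^ (-t))) *
          star U := by simp only [Matrix.mul_assoc]
    _ = 1 := by
      rw [Unitary.coe_star_mul_self, Matrix.mul_one, hD, Matrix.mul_one]
      exact Unitary.coe_mul_star_self _

theorem isUnit_mpow (hA : A.PosDef) (t : ℝ) : IsUnit (mpow A t) :=
  IsUnit.of_mul_eq_one _ (mpow_mul_mpow_neg hA t)

theorem eigsDesc_eq_comp (hA : A.IsHermitian) :
    eigsDesc A = hA.eigenvalues ∘ (Fin.revPerm.trans (Tuple.sort hA.eigenvalues)) := by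
  rw [eigsDesc, dif_pos hA]
  rfl

theorem antitone_eigsDesc (hA : A.IsHermitian) : Antitone (eigsDesc A) := by
  rw [eigsDesc_eq_comp hA]
  exact fun i j hij => Tuple.monotone_sort hA.eigenvalues (Fin.rev_le_rev.mpr hij)

theorem eigsDesc_pos (hA : A.PosDef) (i : Fin n) : 0 < eigsDesc A i := by
  rw [eigsDesc_eq_comp hA.1]
  exact hA.eigenvalues_pos _

theorem exists_orthogonal_eq_mul_diagonal_eigsDesc (hA : A.IsHermitian) :
    ∃ W : Matrix (Fin n) (Fin n) ℝ, Wᵀ * W = 1 ∧ A = W * diagonal (eigsDesc A) * Wᵀ := by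
  set U : Matrix (Fin n) (Fin n) ℝ := (hA.eigenvectorUnitary : Matrix (Fin n) (Fin n) ℝ)
  have hUU : Uᵀ * U = 1 := by
    simpa [star_eq_conjTranspose] using Unitary.coe_star_mul_self hA.eigenvectorUnitary
  have hA' : A = U * diagonal hA.eigenvalues * Uᵀ := by
    simpa [RCLike.ofReal_real_eq_id, star_eq_conjTranspose] using hA.spectral_theorem
  set π := Fin.revPerm.trans (Tuple.sort hA.eigenvalues)
  refine ⟨U.submatrix id π, ?_, ?_⟩
  · rw [transpose_submatrix, ← submatrix_mul _ _ _ id _ Function.bijective_id, hUU,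
      submatrix_one_equiv]
  · rw [eigsDesc_eq_comp hA, ← submatrix_diagonal_equiv, transpose_submatrix,
      submatrix_mul_equiv, submatrix_mul_equiv, ← hA', submatrix_id_id]

end Spectral

theorem Matrix.exists_thin_svd {m k : ℕ} {N : Matrix (Fin m) (Fin k) ℝ}
    (hN : Function.Injective N.mulVec) :
    ∃ (P : Matrix (Fin m) (Fin k) ℝ) (W : Matrix (Fin k) (Fin k) ℝ),
      Pᵀ * P = 1 ∧ Wᵀ * W = 1 ∧
        N = P * diagonal (fun i => √(eigsDesc (Nᵀ * N) i)) * Wᵀ := by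
  have hG : (Nᵀ * N).PosDef := by
    simpa [conjTranspose_eq_transpose_of_trivial] using PosDef.conjTranspose_mul_self N hN
  obtain ⟨W, hWW, hG'⟩ := exists_orthogonal_eq_mul_diagonal_eigsDesc hG.1
  have hWW' : W * Wᵀ = 1 := mul_eq_one_comm.mp hWW
  set μ := eigsDesc (Nᵀ * N)
  have hs : ∀ i, √(μ i) ≠ 0 := fun i => (Real.sqrt_pos.mpr (eigsDesc_pos hG i)).ne'
  set Dinv := diagonal (fun i => (√(μ i))⁻¹)
  have hWGW : Wᵀ * (Nᵀ * N) * W = diagonal μ := by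
    rw [hG']
    calc Wᵀ * (W * diagonal μ * Wᵀ) * W = (Wᵀ * W) * diagonal μ * (Wᵀ * W) := by
          simp only [Matrix.mul_assoc]
      _ = diagonal μ := by rw [hWW, Matrix.one_mul, Matrix.mul_one]
  have hinv : Dinv * diagonal (fun i => √(μ i)) = 1 := by
    rw [diagonal_mul_diagonal, ← diagonal_one]
    exact congrArg diagonal (funext fun i => inv_mul_cancel₀ (hs i))
  refine ⟨N * W * Dinv, W, ?_, hWW, ?_⟩
  · calc (N * W * Dinv)ᵀ * (N * W * Dinv) = Dinv * (Wᵀ * (Nᵀ * N) * W) * Dinv := by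
          simp only [Dinv, transpose_mul, diagonal_transpose, Matrix.mul_assoc]
      _ = 1 := by
          rw [hWGW, diagonal_mul_diagonal, diagonal_mul_diagonal, ← diagonal_one]
          refine congrArg diagonal (funext fun i => ?_)
          field_simp [hs i]
          exact (Real.sq_sqrt (eigsDesc_pos hG i).le).symm
  · calc N = N * W * (Dinv * diagonal (fun i => √(μ i))) * Wᵀ := by
          rw [hinv, Matrix.mul_one, Matrix.mul_assoc, hWW', Matrix.mul_one]
      _ = _ := by simp only [Matrix.mul_assoc]

theorem Matrix.isHermitian_transpose_mul_self {m k : Type*} [Fintype m] (N : Matrix m k ℝ) :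
    (Nᵀ * N).IsHermitian := by
  rw [IsHermitian, conjTranspose_eq_transpose_of_trivial, transpose_mul, transpose_transpose]

theorem Matrix.transpose_mul_transpose_mul_self_eq_one {m k : Type*} [Fintype m]
    [DecidableEq m] [DecidableEq k] {R : Matrix m m ℝ} {Z : Matrix m k ℝ} (hR : R * Rᵀ = 1) (hZ : Zᵀ * Z = 1) :
    (Rᵀ * Z)ᵀ * (Rᵀ * Z) = 1 := by
  rw [transpose_mul, transpose_transpose, Matrix.mul_assoc, ← Matrix.mul_assoc R, hR,
    Matrix.one_mul, hZ]

theorem Matrix.abs_det_eq_one_of_transpose_mul_self {m : Type*} [Fintype m] [DecidableEq m]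
    {U : Matrix m m ℝ} (hU : Uᵀ * U = 1) : |U.det| = 1 := by
  have h := congrArg det hU
  rw [det_mul, det_transpose, det_one] at h
  rcases mul_self_eq_one_iff.mp h with h | h <;> simp [h]

section SingularValues

variable {g A B : Matrix (Fin n) (Fin n) ℝ}

theorem svals_nonneg (g : Matrix (Fin n) (Fin n) ℝ) : 0 ≤ svals g := fun _ => Real.sqrt_nonneg _

theorem antitone_svals (g : Matrix (Fin n) (Fin n) ℝ) : Antitone (svals g) :=
  fun _ _ h => Real.sqrt_le_sqrt (antitone_eigsDesc (isHermitian_transpose_mul_self g) h)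

theorem svals_pos (hg : IsUnit g) (i : Fin n) : 0 < svals g i := by
  have hG : (gᵀ * g).PosDef := by
    simpa [conjTranspose_eq_transpose_of_trivial] using
      PosDef.conjTranspose_mul_self g (mulVec_injective_iff_isUnit.mpr hg)
  exact Real.sqrt_pos.mpr (eigsDesc_pos hG i)

def svProd (g : Matrix (Fin n) (Fin n) ℝ) (k : ℕ) : ℝ :=
  ∏ i ∈ univ.filter (fun i : Fin n => (i : ℕ) < k), svals g i

theorem svProd_pos (hg : IsUnit g) (k : ℕ) : 0 < svProd g k :=
  prod_pos fun i _ => svals_pos hg i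

theorem abs_det_transpose_mul_mul_le_svProd (hg : IsUnit g) {k : ℕ}
    {X Y : Matrix (Fin n) (Fin k) ℝ} (hX : Xᵀ * X = 1) (hY : Yᵀ * Y = 1) :
    |(Xᵀ * g * Y).det| ≤ svProd g k := by
  obtain ⟨P, W, hP, hW, hg'⟩ := exists_thin_svd (mulVec_injective_iff_isUnit.mpr hg)
  have hXY : Xᵀ * g * Y = (Pᵀ * X)ᵀ * diagonal (svals g) * (Wᵀ * Y) := by
    conv_lhs => rw [hg']
    simp only [transpose_mul, transpose_transpose, Matrix.mul_assoc]
    rfl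
  rw [hXY]
  exact abs_det_transpose_mul_diagonal_mul_le (antitone_svals g) (svals_nonneg g)
    (transpose_mul_transpose_mul_self_eq_one (mul_eq_one_comm.mp hP) hX)
    (transpose_mul_transpose_mul_self_eq_one (mul_eq_one_comm.mp hW) hY)

theorem exists_det_transpose_mul_mul_eq_svProd (hg : IsUnit g) {k : ℕ} (hk : k ≤ n) :
    ∃ U V : Matrix (Fin n) (Fin k) ℝ,
      Uᵀ * U = 1 ∧ Vᵀ * V = 1 ∧ (Uᵀ * g * V).det = svProd g k := by
  obtain ⟨P, W, hP, hW, hg'⟩ := exists_thin_svd (mulVec_injective_iff_isUnit.mpr hg)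
  have he := Fin.castLE_injective hk
  have hselect : ∀ R S T : Matrix (Fin n) (Fin n) ℝ,
      (R.submatrix id (Fin.castLE hk))ᵀ * S * T.submatrix id (Fin.castLE hk) =
        (Rᵀ * S * T).submatrix (Fin.castLE hk) (Fin.castLE hk) := by
    intro R S T
    ext i j
    simp [mul_apply]
  refine ⟨P.submatrix id (Fin.castLE hk), W.submatrix id (Fin.castLE hk), ?_, ?_, ?_⟩
  · simpa [hP, submatrix_one _ he] using hselect P 1 P
  · simpa [hW, submatrix_one _ he] using hselect W 1 W
  · have hPgW : Pᵀ * g * W = diagonal (svals g) := by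
      conv_lhs => rw [hg']
      simp only [← Matrix.mul_assoc, hP, Matrix.one_mul]
      rw [Matrix.mul_assoc, hW, Matrix.mul_one]
      rfl
    rw [hselect, hPgW, submatrix_diagonal _ _ he, det_diagonal, svProd, Fin.prod_filter_val_lt hk]
    rfl

/-- **Horn's inequality**. -/
theorem svProd_mul_le (hA : IsUnit A) (hB : IsUnit B) {k : ℕ} (hk : k ≤ n) :
    svProd (A * B) k ≤ svProd A k * svProd B k := by
  obtain ⟨U, V, hU, hV, hUV⟩ := exists_det_transpose_mul_mul_eq_svProd (hA.mul hB) hk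
  have hBV : Function.Injective (B * V).mulVec := by
    have hVinv : Function.LeftInverse Vᵀ.mulVec V.mulVec := fun x => by
      rw [mulVec_mulVec, hV, one_mulVec]
    convert (mulVec_injective_iff_isUnit.mpr hB).comp hVinv.injective using 1
    funext x
    exact (mulVec_mulVec x B V).symm
  obtain ⟨Q, W, hQ, -, hQW⟩ := exists_thin_svd hBV
  -- `Q` spans the range of `B V`, so `Q Qᵀ` fixes it and `Uᵀ (A B) V` splits through `Q`.
  have hsplit : Uᵀ * (A * B) * V = (Uᵀ * A * Q) * (Qᵀ * B * V) := by
    have hQQ : Q * (Qᵀ * (B * V)) = B * V := by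
      conv_lhs => rw [hQW]
      rw [← Matrix.mul_assoc Qᵀ, ← Matrix.mul_assoc Qᵀ, hQ, Matrix.one_mul]
      simpa only [Matrix.mul_assoc] using hQW.symm
    simp only [Matrix.mul_assoc] at hQQ ⊢
    rw [hQQ]
  calc svProd (A * B) k = (Uᵀ * A * Q).det * (Qᵀ * B * V).det := by
        rw [← hUV, hsplit, det_mul]
    _ ≤ |(Uᵀ * A * Q).det| * |(Qᵀ * B * V).det| := by rw [← abs_mul]; exact le_abs_self _
    _ ≤ svProd A k * svProd B k :=
      mul_le_mul (abs_det_transpose_mul_mul_le_svProd hA hU hQ)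
        (abs_det_transpose_mul_mul_le_svProd hB hQ hV) (abs_nonneg _) (svProd_pos hA k).le

theorem svProd_eq_abs_det (hg : IsUnit g) : svProd g n = |g.det| := by
  obtain ⟨U, V, hU, hV, h⟩ := exists_det_transpose_mul_mul_eq_svProd hg le_rfl
  rw [← abs_of_nonneg (svProd_pos hg n).le, ← h, det_mul, det_mul, det_transpose, abs_mul,
    abs_mul, abs_det_eq_one_of_transpose_mul_self hU, abs_det_eq_one_of_transpose_mul_self hV,
    one_mul, mul_one]

end SingularValues

section Majorization

theorem psum_add (ξ η : Fin n → ℝ) (k : ℕ) : psum (ξ + η) k = psum ξ k + psum η k :=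
  sum_add_distrib

theorem psum_smul (c : ℝ) (ξ : Fin n → ℝ) (k : ℕ) : psum (c • ξ) k = c * psum ξ k :=
  (mul_sum _ _ _).symm

theorem maj.smul {ξ η : Fin n → ℝ} (h : maj ξ η) {c : ℝ} (hc : 0 ≤ c) : maj (c • ξ) (c • η) :=
  ⟨fun k hk => by simpa only [psum_smul] using mul_le_mul_of_nonneg_left (h.1 k hk) hc,
    by rw [psum_smul, psum_smul, h.2]⟩

theorem psum_sigmaVec {g : Matrix (Fin n) (Fin n) ℝ} (hg : IsUnit g) (k : ℕ) :
    psum (sigmaVec g) k = Real.logb 2 (svProd g k) := by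
  rw [psum, svProd, Real.logb_prod _ _ fun i _ => (svals_pos hg i).ne']
  rfl

theorem maj_sigmaVec_mul {A B : Matrix (Fin n) (Fin n) ℝ} (hA : IsUnit A) (hB : IsUnit B) :
    maj (sigmaVec (A * B)) (sigmaVec A + sigmaVec B) := by
  have hsum : ∀ k, psum (sigmaVec A + sigmaVec B) k = Real.logb 2 (svProd A k * svProd B k) :=
    fun k => by
      rw [psum_add, psum_sigmaVec hA, psum_sigmaVec hB,
        Real.logb_mul (svProd_pos hA k).ne' (svProd_pos hB k).ne']
  refine ⟨fun k hk => ?_, ?_⟩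
  · rw [psum_sigmaVec (hA.mul hB), hsum]
    exact Real.logb_le_logb_of_le one_lt_two (svProd_pos (hA.mul hB) k) (svProd_mul_le hA hB hk.le)
  · rw [psum_sigmaVec (hA.mul hB), hsum, svProd_eq_abs_det (hA.mul hB), svProd_eq_abs_det hA,
      svProd_eq_abs_det hB, det_mul, abs_mul]

end Majorization

/-- The triangle inequality for the vectorial distance with respect to
the majorization order: `d⃗(p,q) ⪯ d⃗(p,r) + d⃗(r,q)`. -/
theorem statement8 {n : ℕ} (p q r : Matrix (Fin n) (Fin n) ℝ)
    (hp : p.PosDef) (hq : q.PosDef) (hr : r.PosDef) :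
    maj (vecd p q) (fun i => vecd p r i + vecd r q i) := by
  have hcancel : (mpow p (-(1/2)) * mpow r (1/2)) * (mpow r (-(1/2)) * mpow q (1/2)) =
      mpow p (-(1/2)) * mpow q (1/2) := by
    rw [Matrix.mul_assoc, ← Matrix.mul_assoc (mpow r _), mpow_mul_mpow_neg hr, Matrix.one_mul]
  have h := maj_sigmaVec_mul ((isUnit_mpow hp (-(1/2))).mul (isUnit_mpow hr (1/2)))
    ((isUnit_mpow hr (-(1/2))).mul (isUnit_mpow hq (1/2)))
  rw [hcancel] at h
  have h2 := h.smul zero_le_two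
  rwa [smul_add] at h2

end
end

section
/- Let g : ℝ → GL(n,ℝ) be C¹ with g(0) = I and g′(0) = H. Then the vector σ⃗(g(t)) of base-2 logarithms of singular values of g(t) (in nonincreasing order) has a right derivative at t = 0 equal to (1/(2 ln 2)) (λ₁(H + Hᵀ), …, λₙ(H + Hᵀ)), where λᵢ denotes the i-th largest eigenvalue. -/
/-!
Write `A(t) = g(t)ᵀ g(t)`, so that `σ⃗(g(t)) = ½ log₂ λ(A(t))` and `A(t) = 1 + t B + o(t)` with
`B = H + Hᵀ`. For `t ≥ 0` the matrix `1 + t B` has the eigenvalues `1 + t λᵢ(B)`, still in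
nonincreasing order (for `t < 0` the order flips, which is why the derivative is one-sided).
Weyl's inequality `|λᵢ(X) - λᵢ(Y)| ≤ ‖X - Y‖`, proved by the Courant–Fischer dimension count,
turns the `o(t)` error in `A(t)` into an `o(t)` error in its ordered eigenvalues, so
`λᵢ(A(t)) = 1 + t λᵢ(B) + o(t)`; the chain rule for `log` at `1` finishes the proof.
-/

open Matrix

noncomputable section

variable {n : ℕ}

attribute [local instance] Matrix.normedAddCommGroup Matrix.normedSpace

open scoped RealInnerProductSpace

theorem Submodule.exists_ne_zero_mem_of_finrank_lt {K V : Type*} [DivisionRing K]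
    [AddCommGroup V] [Module K V] [FiniteDimensional K V] {s t : Submodule K V}
    (h : Module.finrank K V < Module.finrank K s + Module.finrank K t) :
    ∃ x ∈ s, x ∈ t ∧ x ≠ 0 := by
  by_contra! hst
  exact h.not_ge (Submodule.finrank_add_finrank_le_of_disjoint
    (Submodule.disjoint_def.mpr fun x hs ht => hst x hs ht))

namespace OrthonormalBasis

variable {ι E : Type*} [Fintype ι] [NormedAddCommGroup E] [InnerProductSpace ℝ E]
  (b : OrthonormalBasis ι ℝ E)

theorem inner_eq_zero_of_mem_span_image {s : Set ι} {x : E}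
    (hx : x ∈ Submodule.span ℝ (b '' s)) {j : ι} (hj : j ∉ s) : ⟪b j, x⟫ = 0 := by
  refine Submodule.mem_orthogonal_singleton_iff_inner_right.mp (Submodule.span_le.mpr ?_ hx)
  rintro _ ⟨k, hk, rfl⟩
  exact Submodule.mem_orthogonal_singleton_iff_inner_right.mpr
    (b.orthonormal.2 fun hjk => hj (hjk ▸ hk))

theorem finrank_span_image (s : Finset ι) :
    Module.finrank ℝ (Submodule.span ℝ (b '' s)) = s.card := by
  rw [Set.image_eq_range]
  exact (finrank_span_eq_card (b.orthonormal.comp _ Subtype.val_injective).linearIndependent).trans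
    (Fintype.card_coe s)

end OrthonormalBasis

namespace LinearMap.IsSymmetric

variable {E : Type*} [NormedAddCommGroup E] [InnerProductSpace ℝ E] [FiniteDimensional ℝ E]
  {T S : E →ₗ[ℝ] E}

theorem eigenvalues_eq_of_orthonormalBasis (hT : T.IsSymmetric) (hn : Module.finrank ℝ E = n)
    (v : OrthonormalBasis (Fin n) ℝ E) {μ : Fin n → ℝ} (hv : ∀ i, T (v i) = μ i • v i)
    (hμ : Antitone μ) : hT.eigenvalues hn = μ := by
  have hmat : T.toMatrix v.toBasis v.toBasis = Matrix.diagonal μ := by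
    ext i j
    by_cases hij : i = j
    · subst hij; simp [LinearMap.toMatrix_apply, hv]
    · simp [LinearMap.toMatrix_apply, hv, hij]
  have hroots : T.charpoly.roots = Multiset.map μ Finset.univ.val := by
    rw [← T.charpoly_toMatrix v.toBasis, hmat, Matrix.charpoly_diagonal,
      Polynomial.roots_prod _ _ (by simp [Finset.prod_ne_zero_iff, Polynomial.X_sub_C_ne_zero])]
    simp
  apply List.ofFn_injective
  rw [← hT.sort_roots_charpoly_eq_eigenvalues hn, hroots]
  simp_rw [RCLike.re_to_real, Multiset.map_id', Fin.univ_val_map, Multiset.coe_sort]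
  apply List.mergeSort_of_pairwise
  simp_rw [decide_eq_true_eq, ← List.sortedGE_iff_pairwise]
  exact hμ.sortedGE_ofFn

theorem inner_apply_self_eq_sum (hT : T.IsSymmetric) (hn : Module.finrank ℝ E = n) (x : E) :
    ⟪x, T x⟫ = ∑ j, hT.eigenvalues hn j * ⟪hT.eigenvectorBasis hn j, x⟫ ^ 2 := by
  set b := hT.eigenvectorBasis hn
  rw [← b.sum_inner_mul_inner x (T x)]
  refine Finset.sum_congr rfl fun j _ => ?_
  rw [← b.repr_apply_apply, hT.eigenvectorBasis_apply_self_apply, b.repr_apply_apply,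
    real_inner_comm, RCLike.ofReal_real_eq_id, id_eq]
  ring

theorem eigenvalues_mul_norm_sq_le_inner (hT : T.IsSymmetric) (hn : Module.finrank ℝ E = n)
    {i : Fin n} {x : E}
    (hx : x ∈ Submodule.span ℝ (hT.eigenvectorBasis hn '' ↑(Finset.Iic i))) :
    hT.eigenvalues hn i * ‖x‖ ^ 2 ≤ ⟪x, T x⟫ := by
  rw [hT.inner_apply_self_eq_sum hn, ← (hT.eigenvectorBasis hn).sum_sq_inner_right,
    Finset.mul_sum]
  refine Finset.sum_le_sum fun j _ => ?_
  by_cases hj : j ≤ i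
  · exact mul_le_mul_of_nonneg_right (hT.eigenvalues_antitone hn hj) (sq_nonneg _)
  · rw [(hT.eigenvectorBasis hn).inner_eq_zero_of_mem_span_image hx (by simpa using hj)]
    simp

theorem inner_le_eigenvalues_mul_norm_sq (hT : T.IsSymmetric) (hn : Module.finrank ℝ E = n)
    {i : Fin n} {x : E}
    (hx : x ∈ Submodule.span ℝ (hT.eigenvectorBasis hn '' ↑(Finset.Ici i))) :
    ⟪x, T x⟫ ≤ hT.eigenvalues hn i * ‖x‖ ^ 2 := by
  rw [hT.inner_apply_self_eq_sum hn, ← (hT.eigenvectorBasis hn).sum_sq_inner_right,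
    Finset.mul_sum]
  refine Finset.sum_le_sum fun j _ => ?_
  by_cases hj : i ≤ j
  · exact mul_le_mul_of_nonneg_right (hT.eigenvalues_antitone hn hj) (sq_nonneg _)
  · rw [(hT.eigenvectorBasis hn).inner_eq_zero_of_mem_span_image hx (by simpa using hj)]
    simp

theorem eigenvalues_sub_le (hT : T.IsSymmetric) (hS : S.IsSymmetric)
    (hn : Module.finrank ℝ E = n) {c : ℝ} (hc : ∀ x, ⟪x, T x⟫ - ⟪x, S x⟫ ≤ c * ‖x‖ ^ 2)
    (i : Fin n) : hT.eigenvalues hn i - hS.eigenvalues hn i ≤ c := by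
  -- the top `i + 1` eigenvectors of `T` and the bottom `n - i` eigenvectors of `S` span
  -- subspaces that must meet
  have hdim : Module.finrank ℝ E <
      Module.finrank ℝ (Submodule.span ℝ (hT.eigenvectorBasis hn '' ↑(Finset.Iic i))) +
        Module.finrank ℝ (Submodule.span ℝ (hS.eigenvectorBasis hn '' ↑(Finset.Ici i))) := by
    rw [OrthonormalBasis.finrank_span_image, OrthonormalBasis.finrank_span_image, Fin.card_Iic,
      Fin.card_Ici]
    omega
  obtain ⟨x, hxT, hxS, hx⟩ := Submodule.exists_ne_zero_mem_of_finrank_lt hdim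
  have hTx := hT.eigenvalues_mul_norm_sq_le_inner hn hxT
  have hSx := hS.inner_le_eigenvalues_mul_norm_sq hn hxS
  have hpos : 0 < ‖x‖ ^ 2 := by positivity
  nlinarith [hc x]

theorem abs_eigenvalues_sub_le_norm {T S : E →L[ℝ] E} (hT : (T : E →ₗ[ℝ] E).IsSymmetric)
    (hS : (S : E →ₗ[ℝ] E).IsSymmetric) (hn : Module.finrank ℝ E = n) (i : Fin n) :
    |hT.eigenvalues hn i - hS.eigenvalues hn i| ≤ ‖T - S‖ := by
  have bound : ∀ (U V : E →L[ℝ] E) (x : E), ⟪x, U x⟫ - ⟪x, V x⟫ ≤ ‖U - V‖ * ‖x‖ ^ 2 :=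
    fun U V x => calc
      ⟪x, U x⟫ - ⟪x, V x⟫ = ⟪x, (U - V) x⟫ := (inner_sub_right x (U x) (V x)).symm
      _ ≤ ‖x‖ * ‖(U - V) x‖ := real_inner_le_norm _ _
      _ ≤ ‖x‖ * (‖U - V‖ * ‖x‖) := by gcongr; exact (U - V).le_opNorm x
      _ = ‖U - V‖ * ‖x‖ ^ 2 := by ring
  rw [abs_sub_le_iff]
  exact ⟨eigenvalues_sub_le hT hS hn (bound T S) i,
    norm_sub_rev T S ▸ eigenvalues_sub_le hS hT hn (bound S T) i⟩

end LinearMap.IsSymmetric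

theorem Matrix.posSemidef_transpose_mul_self {m : Type*} [Fintype m] (A : Matrix m m ℝ) :
    (Aᵀ * A).PosSemidef := by
  simpa [conjTranspose_eq_transpose_of_trivial] using posSemidef_conjTranspose_mul_self A

section eigsDesc

variable {A B : Matrix (Fin n) (Fin n) ℝ}

/- `IsHermitian.eigenvalues` comes in an unspecified order; the sorted eigenvalues are those of
the symmetric operator `toEuclideanLin A`. -/
theorem eigsDesc_eq_eigenvalues (hA : A.IsHermitian) :
    eigsDesc A =
      (isSymmetric_toEuclideanLin_iff.mpr hA).eigenvalues finrank_euclideanSpace_fin := by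
  set σ : Equiv.Perm (Fin n) := Fin.revPerm.trans (Tuple.sort hA.eigenvalues)
  have hσ : eigsDesc A = hA.eigenvalues ∘ σ := by
    funext i
    simp only [eigsDesc, dif_pos hA]
    rfl
  refine (LinearMap.IsSymmetric.eigenvalues_eq_of_orthonormalBasis _ _
    (hA.eigenvectorBasis.reindex σ.symm) (fun i => ?_) ?_).symm
  · rw [hσ, OrthonormalBasis.reindex_apply, Equiv.symm_symm]
    exact congrArg (WithLp.toLp 2) (hA.mulVec_eigenvectorBasis (σ i))
  · rw [hσ]
    exact (Tuple.monotone_sort hA.eigenvalues).comp_antitone fun _ _ h => Fin.rev_le_rev.mpr h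

theorem eigsDesc_one_add_smul (hB : B.IsHermitian) {t : ℝ} (ht : 0 ≤ t) :
    eigsDesc (1 + t • B) = fun i => 1 + t * eigsDesc B i := by
  have hC : (1 + t • B).IsHermitian := isHermitian_one.add (hB.smul (.all t))
  set hTB := isSymmetric_toEuclideanLin_iff.mpr hB
  rw [eigsDesc_eq_eigenvalues hC, eigsDesc_eq_eigenvalues hB]
  refine LinearMap.IsSymmetric.eigenvalues_eq_of_orthonormalBasis _ _
    (hTB.eigenvectorBasis finrank_euclideanSpace_fin) (fun i => ?_) fun i j hij => ?_
  · rw [map_add, map_smul, toLpLin_one, LinearMap.add_apply, LinearMap.smul_apply,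
      hTB.apply_eigenvectorBasis, LinearMap.id_apply, smul_smul, add_smul, one_smul,
      RCLike.ofReal_real_eq_id, id_eq]
  · have := hTB.eigenvalues_antitone finrank_euclideanSpace_fin hij
    gcongr

theorem eigsDesc_one : eigsDesc (1 : Matrix (Fin n) (Fin n) ℝ) = 1 := by
  simpa [Pi.one_def] using eigsDesc_one_add_smul (isHermitian_zero (n := Fin n) (α := ℝ)) le_rfl

theorem abs_eigsDesc_sub_le (hA : A.IsHermitian) (hB : B.IsHermitian) (i : Fin n) :
    |eigsDesc A i - eigsDesc B i| ≤ ‖toEuclideanCLM (𝕜 := ℝ) (A - B)‖ := by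
  rw [eigsDesc_eq_eigenvalues hA, eigsDesc_eq_eigenvalues hB, map_sub]
  exact LinearMap.IsSymmetric.abs_eigenvalues_sub_le_norm
    (T := toEuclideanCLM (𝕜 := ℝ) A) (S := toEuclideanCLM (𝕜 := ℝ) B) _ _ _ i

theorem isBigO_eigsDesc_sub {α : Type*} {l : Filter α} {A B : α → Matrix (Fin n) (Fin n) ℝ}
    (hA : ∀ a, (A a).IsHermitian) (hB : ∀ a, (B a).IsHermitian) (i : Fin n) :
    (fun a => eigsDesc (A a) i - eigsDesc (B a) i) =O[l] fun a => A a - B a :=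
  (Asymptotics.IsBigO.of_norm_le fun a => abs_eigsDesc_sub_le (hA a) (hB a) i).trans
    ((toEuclideanCLM (n := Fin n) (𝕜 := ℝ)).toAlgEquiv.toLinearMap.toContinuousLinearMap.isBigO_comp
      (fun a => A a - B a) l).norm_left

theorem eigsDesc_nonneg (hA : A.PosSemidef) (i : Fin n) : 0 ≤ eigsDesc A i := by
  simp only [eigsDesc, dif_pos hA.isHermitian]
  exact hA.eigenvalues_nonneg _

end eigsDesc

theorem HasDerivAt.matrix_transpose_mul_self {m : Type*} [Fintype m] {g : ℝ → Matrix m m ℝ}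
    {g' : Matrix m m ℝ} {x : ℝ} (hg : HasDerivAt g g' x) :
    HasDerivAt (fun t => (g t)ᵀ * g t) ((g x)ᵀ * g' + g'ᵀ * g x) x := by
  let β : Matrix m m ℝ →L[ℝ] Matrix m m ℝ →L[ℝ] Matrix m m ℝ :=
    (LinearMap.mk₂ ℝ (fun X Y : Matrix m m ℝ => Xᵀ * Y) (by simp [Matrix.add_mul])
      (by simp) (by simp [Matrix.mul_add]) (by simp)).toContinuousBilinearMap
  exact β.hasDerivAt_of_bilinear (fun _ => hg) fun _ => hg

open Set Topology in
theorem hasDerivWithinAt_eigsDesc_of_eq_one {A : ℝ → Matrix (Fin n) (Fin n) ℝ}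
    {B : Matrix (Fin n) (Fin n) ℝ} (hA : ∀ t, (A t).IsHermitian) (hB : B.IsHermitian)
    (h0 : A 0 = 1) (hAB : HasDerivAt A B 0) (i : Fin n) :
    HasDerivWithinAt (fun t => eigsDesc (A t) i) (eigsDesc B i) (Ici 0) 0 := by
  have hlin : ∀ t ∈ Ici (0 : ℝ),
      eigsDesc (A 0) i + (t - 0) • eigsDesc B i = eigsDesc (1 + t • B) i := by
    intro t ht
    rw [h0, eigsDesc_one, Pi.one_apply, eigsDesc_one_add_smul hB ht, sub_zero, smul_eq_mul]
  rw [hasDerivWithinAt_iff_isLittleO]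
  have hbig := isBigO_eigsDesc_sub (l := 𝓝[Ici 0] 0) hA
    (fun t => isHermitian_one.add (hB.smul (.all t))) i
  refine (hbig.congr' ?_ ?_).trans_isLittleO
    ((hasDerivAt_iff_isLittleO.mp hAB).mono nhdsWithin_le_nhds)
  · filter_upwards [self_mem_nhdsWithin] with t ht
    rw [sub_sub, hlin t ht]
  · filter_upwards with t
    rw [h0, sub_zero, sub_sub]

theorem sigmaVec_eq_log_eigsDesc (g : Matrix (Fin n) (Fin n) ℝ) (i : Fin n) :
    sigmaVec g i = Real.log (eigsDesc (gᵀ * g) i) / (2 * Real.log 2) := by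
  rw [sigmaVec, svals, Real.logb,
    Real.log_sqrt (eigsDesc_nonneg (posSemidef_transpose_mul_self g) i), div_div]

theorem statement14_general {n : ℕ} (g : ℝ → Matrix (Fin n) (Fin n) ℝ)
    (H : Matrix (Fin n) (Fin n) ℝ) (hg : ContDiff ℝ 1 g)
    (h0 : g 0 = 1) (hH : deriv g 0 = H) :
    HasDerivWithinAt (fun t => sigmaVec (g t))
      (fun i => (1 / (2 * Real.log 2)) * eigsDesc (H + Hᵀ) i) (Set.Ici (0:ℝ)) 0 := by
  have hgH : HasDerivAt g H 0 := hH ▸ (hg.differentiable one_ne_zero 0).hasDerivAt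
  have hA : HasDerivAt (fun t => (g t)ᵀ * g t) (H + Hᵀ) 0 := by
    simpa [h0] using hgH.matrix_transpose_mul_self
  have hB : (H + Hᵀ).IsHermitian := by
    simp [IsHermitian, conjTranspose_eq_transpose_of_trivial, add_comm]
  rw [hasDerivWithinAt_pi]
  intro i
  have hev := hasDerivWithinAt_eigsDesc_of_eq_one
    (fun t => (posSemidef_transpose_mul_self (g t)).isHermitian) hB (by simp [h0]) hA i
  have hA0 : eigsDesc ((g 0)ᵀ * g 0) i = 1 := by simp [h0, eigsDesc_one]
  have hlog := (hev.log (hA0.symm ▸ one_ne_zero)).div_const (2 * Real.log 2)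
  rw [hA0, div_one, ← one_div_mul_eq_div] at hlog
  simp_rw [sigmaVec_eq_log_eigsDesc]
  exact hlog

/-- For a `C¹` curve `g : ℝ → GL(n,ℝ)` with `g(0) = I` and `g′(0) = H`,
the vector `σ⃗(g(t))` of base-2 logarithms of singular values (nonincreasing order) has a
right derivative at `t = 0` equal to `(1/(2 ln 2)) (λ₁(H+Hᵀ), …, λₙ(H+Hᵀ))`, where `λᵢ`
is the `i`-th largest eigenvalue. -/
theorem statement14 {n : ℕ} (g : ℝ → Matrix (Fin n) (Fin n) ℝ)
    (H : Matrix (Fin n) (Fin n) ℝ) (hg : ContDiff ℝ 1 g)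
    (hunit : ∀ t, IsUnit (g t)) (h0 : g 0 = 1) (hH : deriv g 0 = H) :
    HasDerivWithinAt (fun t => sigmaVec (g t))
      (fun i => (1 / (2 * Real.log 2)) * eigsDesc (H + Hᵀ) i) (Set.Ici (0:ℝ)) 0 :=
  statement14_general g H hg h0 hH

end
end

section
/- Consider the Lanford system ẋ = (a−1)x − y + xz, ẏ = x + (a−1)y + yz, ż = az − (x² + y² + z²) with parameter a > 0, and the matrix function P(x,y,z) = diag(1,1,1/2)·exp(2z/a). The three roots λ of det[2(P Dφ)^{sym} + Ṗ − λP] = 0 (with Ṗ the orbital derivative of P along the flow) satisfy λ₁ = 2(a−2z) + (2/a)(az − z² − x² − y²) and λ₂ = λ₃ = 2(a−1+z) + (2/a)(az − z² − x² − y²); moreover on any region with z ≥ 0 one has λ₁ ≤ 2a, λ₂ = λ₃ ≤ 2(2a−1), and λ₁ + 2λ₂ ≤ (15/2)a − 4 for all (x,y,z) ∈ ℝ³. -/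
/-! The weight `diag(1,1,1/2)` makes `2(P Dφ)^{sym}` equal to `P` times a diagonal matrix, and `Ṗ`
is a scalar multiple of `P`, so `2(P Dφ)^{sym} + Ṗ − λP` is `P` times a diagonal matrix whose
entries are the `λᵢ − λ`. The bounds are completions of the square in `z`:
`k z − z²/a ≤ k² a / 4` for `a > 0`. -/

open Matrix

noncomputable section

variable {n : ℕ}

lemma mul_sub_sq_div_le {a : ℝ} (ha : 0 < a) (k z : ℝ) : k * z - z ^ 2 / a ≤ k ^ 2 * a / 4 := by
  have h : 0 ≤ (z - k * a / 2) ^ 2 / a := by positivity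
  have hexpand : (z - k * a / 2) ^ 2 / a = k ^ 2 * a / 4 - (k * z - z ^ 2 / a) := by
    field_simp
    ring
  linarith

lemma two_div_mul_sub_sq_le {a : ℝ} (ha : 0 < a) (x y z : ℝ) :
    (2 / a) * (a * z - z ^ 2 - x ^ 2 - y ^ 2) ≤ 2 * (z - z ^ 2 / a) := by
  have h : (2 / a) * (a * z - z ^ 2 - x ^ 2 - y ^ 2)
      = 2 * (z - z ^ 2 / a) - 2 * (x ^ 2 + y ^ 2) / a := by
    field_simp
    ring
  have hxy : 0 ≤ 2 * (x ^ 2 + y ^ 2) / a := by positivity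
  linarith

/- The weight `1/2` on the `z`-row exactly compensates the factor `-2` in the third row of the
Jacobian, so the off-diagonal entries cancel in the symmetrization. -/
lemma weight_mul_add_transpose {W D : Matrix (Fin 3) (Fin 3) ℝ} {p q x y : ℝ}
    (hW : W = !![1, 0, 0; 0, 1, 0; 0, 0, 1/2]) (hD : D = !![p, -1, x; 1, p, y; -2*x, -2*y, q]) :
    W * D + (W * D)ᵀ = W * diagonal ![2 * p, 2 * p, 2 * q] := by
  subst hW hD
  ext i j
  fin_cases i <;> fin_cases j <;> simp [Matrix.mul_apply, Fin.sum_univ_three] <;> ring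

lemma det_weight_mul_add_transpose_add_smul {W D : Matrix (Fin 3) (Fin 3) ℝ} {p q x y : ℝ}
    (hW : W = !![1, 0, 0; 0, 1, 0; 0, 0, 1/2]) (hD : D = !![p, -1, x; 1, p, y; -2*x, -2*y, q])
    (e c lam : ℝ) :
    ((e • W) * D + ((e • W) * D)ᵀ + c • (e • W) - lam • (e • W)).det
      = e ^ 3 * (1/2) * (2 * q + c - lam) * (2 * p + c - lam) ^ 2 := by
  have hdiag : W * diagonal ![2 * p + c - lam, 2 * p + c - lam, 2 * q + c - lam]
      = W * diagonal ![2 * p, 2 * p, 2 * q] + (c - lam) • W := by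
    rw [smul_eq_mul_diagonal W, ← Matrix.mul_add, diagonal_add]
    congr 2
    ext i
    fin_cases i <;> simp <;> ring
  have hM : (e • W) * D + ((e • W) * D)ᵀ + c • (e • W) - lam • (e • W)
      = e • (W * diagonal ![2 * p + c - lam, 2 * p + c - lam, 2 * q + c - lam]) := by
    rw [hdiag, ← weight_mul_add_transpose hW hD, smul_mul_assoc, transpose_smul]
    module
  have hdetW : W.det = 1 / 2 := by simp [hW, det_fin_three]
  rw [hM, det_smul, det_mul, det_diagonal, Fin.prod_univ_three, hdetW]
  simp only [Fintype.card_fin, Matrix.cons_val_zero, Matrix.cons_val_one, Matrix.cons_val_two,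
    Matrix.head_cons, Matrix.tail_cons]
  ring

/-- For the Lanford system with parameter `a > 0` and the metric
`P = diag(1,1,1/2)·exp(2z/a)`, the roots of `det[2(P Dφ)^{sym} + Ṗ − λP] = 0` are
`λ₁ = 2(a−2z) + (2/a)(az−z²−x²−y²)` (simple) and
`λ₂ = λ₃ = 2(a−1+z) + (2/a)(az−z²−x²−y²)` (double); moreover if `z ≥ 0` then
`λ₁ ≤ 2a` and `λ₂ ≤ 2(2a−1)`, and `λ₁ + 2λ₂ ≤ (15/2)a − 4` for all `(x,y,z) ∈ ℝ³`. -/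
theorem statement19 (a : ℝ) (ha : 0 < a) (x y z : ℝ)
    (Dφ P Pdot : Matrix (Fin 3) (Fin 3) ℝ) (l1 l2 : ℝ)
    (hDφ : Dφ = !![a - 1 + z, -1, x; 1, a - 1 + z, y; -2*x, -2*y, a - 2*z])
    (hP : P = Real.exp (2 * z / a) • !![1, 0, 0; 0, 1, 0; 0, 0, 1/2])
    (hPdot : Pdot = ((2 / a) * (a * z - x^2 - y^2 - z^2)) • P)
    (hl1 : l1 = 2 * (a - 2*z) + (2 / a) * (a * z - z^2 - x^2 - y^2))
    (hl2 : l2 = 2 * (a - 1 + z) + (2 / a) * (a * z - z^2 - x^2 - y^2)) :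
    (∀ lam : ℝ,
        (P * Dφ + (P * Dφ)ᵀ + Pdot - lam • P).det
          = Real.exp (2 * z / a) ^ 3 * (1/2) * (l1 - lam) * (l2 - lam) ^ 2) ∧
    (0 ≤ z → l1 ≤ 2 * a ∧ l2 ≤ 2 * (2 * a - 1)) ∧
    l1 + 2 * l2 ≤ (15/2) * a - 4 := by
  refine ⟨fun lam => ?_, fun hz => ⟨?_, ?_⟩, ?_⟩
  · rw [hPdot, hP, det_weight_mul_add_transpose_add_smul rfl hDφ, hl1, hl2]
    ring
  all_goals
    have hc := two_div_mul_sub_sq_le ha x y z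
    have hz2 : 0 ≤ z ^ 2 / a := by positivity
  · linarith
  · linarith [mul_sub_sq_div_le ha 2 z]
  · linarith [mul_sub_sq_div_le ha 1 z]

end
end
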